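/- arXiv:2511.02386 — 5 statements merged into one kernel-verified Lean document; each statement's English description precedes it below -/
import Mathlib

section
/- Every separable permutation avoids the patterns 2413 and 3142. -/
/-- Pattern containment: `π` contains the pattern `σ`. -/
def PermContains {n m : ℕ} (π : Fin n → Fin n) (σ : Fin m → Fin m) : Prop :=
  ∃ f : Fin m → Fin n, StrictMono f ∧ ∀ a b : Fin m, σ a < σ b ↔ π (f a) < π (f b)

/-- The direct sum `σ ⊕ τ` of two permutations. -/
def permDSum {m n : ℕ} (σ : Fin m → Fin m) (τ : Fin n → Fin n) : Fin (m + n) → Fin (m + n) :=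
  fun i =>
    if h : (i : ℕ) < m then
      ⟨(σ ⟨(i : ℕ), h⟩).val, by have := (σ ⟨(i : ℕ), h⟩).isLt; omega⟩
    else
      ⟨m + (τ ⟨(i : ℕ) - m, by omega⟩).val, by
        have := (τ ⟨(i : ℕ) - m, by omega⟩).isLt; omega⟩

/-- The skew sum `σ ⊖ τ` of two permutations. -/
def permSSum {m n : ℕ} (σ : Fin m → Fin m) (τ : Fin n → Fin n) : Fin (m + n) → Fin (m + n) :=
  fun i =>
    if h : (i : ℕ) < m then
      ⟨n + (σ ⟨(i : ℕ), h⟩).val, by have := (σ ⟨(i : ℕ), h⟩).isLt; omega⟩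
    else
      ⟨(τ ⟨(i : ℕ) - m, by omega⟩).val, by
        have := (τ ⟨(i : ℕ) - m, by omega⟩).isLt; omega⟩

/-- Separable permutations: generated from the singleton by direct and skew sums. -/
inductive SeparablePerm : (n : ℕ) → (Fin n → Fin n) → Prop
  | single : SeparablePerm 1 id
  | dsum {m n : ℕ} {σ : Fin m → Fin m} {τ : Fin n → Fin n} :
      SeparablePerm m σ → SeparablePerm n τ → SeparablePerm (m + n) (permDSum σ τ)
  | ssum {m n : ℕ} {σ : Fin m → Fin m} {τ : Fin n → Fin n} :
      SeparablePerm m σ → SeparablePerm n τ → SeparablePerm (m + n) (permSSum σ τ)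

def p2413 : Fin 4 → Fin 4 := ![1, 3, 0, 2]
def p3142 : Fin 4 → Fin 4 := ![2, 0, 3, 1]


section Aux

variable {m n : ℕ} {σ : Fin m → Fin m} {τ : Fin n → Fin n}

lemma dsum_val_lt (i : Fin (m + n)) (h : (i : ℕ) < m) :
    (permDSum σ τ i : ℕ) < m := by
  simp only [permDSum, dif_pos h]
  exact (σ ⟨(i : ℕ), h⟩).isLt

lemma dsum_val_ge (i : Fin (m + n)) (h : ¬ (i : ℕ) < m) :
    m ≤ (permDSum σ τ i : ℕ) := by
  simp only [permDSum, dif_neg h]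
  omega

lemma ssum_val_ge (i : Fin (m + n)) (h : (i : ℕ) < m) :
    n ≤ (permSSum σ τ i : ℕ) := by
  simp only [permSSum, dif_pos h]
  omega

lemma ssum_val_lt (i : Fin (m + n)) (h : ¬ (i : ℕ) < m) :
    (permSSum σ τ i : ℕ) < n := by
  simp only [permSSum, dif_neg h]
  exact (τ ⟨(i : ℕ) - m, by omega⟩).isLt

lemma gen_dsum {p : Fin 4 → Fin 4}
    (hp : ∀ j : Fin 4, (j : ℕ) < 3 → ∃ a b : Fin 4, a ≤ j ∧ j < b ∧ ¬ p a < p b)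
    (h1 : ¬ PermContains σ p) (h2 : ¬ PermContains τ p) :
    ¬ PermContains (permDSum σ τ) p := by
  rintro ⟨f, hf, hiff⟩
  have key : ∀ a b : Fin 4, (f a : ℕ) < m → ¬ (f b : ℕ) < m → p a < p b := by
    intro a b ha hb
    rw [hiff]
    rw [Fin.lt_def]
    have h1' := dsum_val_lt (σ := σ) (τ := τ) (f a) ha
    have h2' := dsum_val_ge (σ := σ) (τ := τ) (f b) hb
    omega
  by_cases hall : ∀ a : Fin 4, (f a : ℕ) < m
  · apply h1
    refine ⟨fun a => ⟨(f a : ℕ), hall a⟩, ?_, ?_⟩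
    · intro a b hab
      exact hf hab
    · intro a b
      rw [hiff]
      simp only [permDSum, dif_pos (hall a), dif_pos (hall b)]
      rw [Fin.lt_def, Fin.lt_def]
  · by_cases hall2 : ∀ a : Fin 4, ¬ (f a : ℕ) < m
    · apply h2
      refine ⟨fun a => ⟨(f a : ℕ) - m, by have := (f a).isLt; have := hall2 a; omega⟩, ?_, ?_⟩
      · intro a b hab
        have := hf hab
        have hb := hall2 a
        rw [Fin.lt_def] at this ⊢
        simp only
        omega
      · intro a b
        rw [hiff]
        simp only [permDSum, dif_neg (hall2 a), dif_neg (hall2 b)]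
        rw [Fin.lt_def, Fin.lt_def]
        simp only
        omega
    · push_neg at hall hall2
      obtain ⟨a0, ha0⟩ := hall
      obtain ⟨b0, hb0⟩ := hall2
      have hlow : (f 0 : ℕ) < m := by
        have : f 0 ≤ f b0 := hf.monotone (Fin.zero_le _)
        rw [Fin.le_def] at this; omega
      have hhigh : ¬ (f 3 : ℕ) < m := by
        have : f a0 ≤ f 3 := hf.monotone (Fin.le_last a0)
        rw [Fin.le_def] at this; omega
      have grab : ∀ j : Fin 4, ∀ _hj : (j : ℕ) < 3, (f j : ℕ) < m →
          ¬ (f ⟨(j : ℕ) + 1, by omega⟩ : ℕ) < m → False := by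
        intro j hj hjl hjh
        obtain ⟨a, b, hab1, hab2, hnlt⟩ := hp j hj
        apply hnlt
        apply key
        · have : f a ≤ f j := hf.monotone hab1
          rw [Fin.le_def] at this; omega
        · have : f ⟨(j : ℕ) + 1, by omega⟩ ≤ f b := by
            apply hf.monotone
            rw [Fin.le_def]
            rw [Fin.lt_def] at hab2
            simp only
            omega
          rw [Fin.le_def] at this; omega
      by_cases hA : (f 1 : ℕ) < m
      · by_cases hB : (f 2 : ℕ) < m
        · exact grab 2 (by norm_num) hB hhigh
        · exact grab 1 (by norm_num) hA hB
      · exact grab 0 (by norm_num) hlow hA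

lemma gen_ssum {p : Fin 4 → Fin 4}
    (hp : ∀ j : Fin 4, (j : ℕ) < 3 → ∃ a b : Fin 4, a ≤ j ∧ j < b ∧ ¬ p b < p a)
    (h1 : ¬ PermContains σ p) (h2 : ¬ PermContains τ p) :
    ¬ PermContains (permSSum σ τ) p := by
  rintro ⟨f, hf, hiff⟩
  have key : ∀ a b : Fin 4, (f a : ℕ) < m → ¬ (f b : ℕ) < m → p b < p a := by
    intro a b ha hb
    rw [hiff]
    rw [Fin.lt_def]
    have h1' := ssum_val_ge (σ := σ) (τ := τ) (f a) ha
    have h2' := ssum_val_lt (σ := σ) (τ := τ) (f b) hb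
    omega
  by_cases hall : ∀ a : Fin 4, (f a : ℕ) < m
  · apply h1
    refine ⟨fun a => ⟨(f a : ℕ), hall a⟩, ?_, ?_⟩
    · intro a b hab
      exact hf hab
    · intro a b
      rw [hiff]
      simp only [permSSum, dif_pos (hall a), dif_pos (hall b)]
      rw [Fin.lt_def, Fin.lt_def]
      simp only
      omega
  · by_cases hall2 : ∀ a : Fin 4, ¬ (f a : ℕ) < m
    · apply h2
      refine ⟨fun a => ⟨(f a : ℕ) - m, by have := (f a).isLt; have := hall2 a; omega⟩, ?_, ?_⟩
      · intro a b hab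
        have := hf hab
        have hb := hall2 a
        rw [Fin.lt_def] at this ⊢
        simp only
        omega
      · intro a b
        rw [hiff]
        simp only [permSSum, dif_neg (hall2 a), dif_neg (hall2 b)]
        rw [Fin.lt_def, Fin.lt_def]
    · push_neg at hall hall2
      obtain ⟨a0, ha0⟩ := hall
      obtain ⟨b0, hb0⟩ := hall2
      have hlow : (f 0 : ℕ) < m := by
        have : f 0 ≤ f b0 := hf.monotone (Fin.zero_le _)
        rw [Fin.le_def] at this; omega
      have hhigh : ¬ (f 3 : ℕ) < m := by
        have : f a0 ≤ f 3 := hf.monotone (Fin.le_last a0)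
        rw [Fin.le_def] at this; omega
      have grab : ∀ j : Fin 4, ∀ _hj : (j : ℕ) < 3, (f j : ℕ) < m →
          ¬ (f ⟨(j : ℕ) + 1, by omega⟩ : ℕ) < m → False := by
        intro j hj hjl hjh
        obtain ⟨a, b, hab1, hab2, hnlt⟩ := hp j hj
        apply hnlt
        apply key
        · have : f a ≤ f j := hf.monotone hab1
          rw [Fin.le_def] at this; omega
        · have : f ⟨(j : ℕ) + 1, by omega⟩ ≤ f b := by
            apply hf.monotone
            rw [Fin.le_def]
            rw [Fin.lt_def] at hab2
            simp only
            omega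
          rw [Fin.le_def] at this; omega
      by_cases hA : (f 1 : ℕ) < m
      · by_cases hB : (f 2 : ℕ) < m
        · exact grab 2 (by norm_num) hB hhigh
        · exact grab 1 (by norm_num) hA hB
      · exact grab 0 (by norm_num) hlow hA

lemma not_contains_single (p : Fin 4 → Fin 4) : ¬ PermContains (id : Fin 1 → Fin 1) p := by
  rintro ⟨f, hf, -⟩
  have := hf (show (0 : Fin 4) < 1 by decide)
  rw [Fin.lt_def] at this
  have h0 := (f 0).isLt
  have h1 := (f 1).isLt
  omega

end Aux

/-- Every separable permutation avoids the patterns 2413 and 3142. -/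
theorem separable_avoids_2413_and_3142 {n : ℕ} (π : Fin n → Fin n)
    (hsep : SeparablePerm n π) :
    ¬ PermContains π p2413 ∧ ¬ PermContains π p3142 := by
  induction hsep with
  | single => exact ⟨not_contains_single _, not_contains_single _⟩
  | dsum h1 h2 ih1 ih2 =>
      exact ⟨gen_dsum (by decide) ih1.1 ih2.1, gen_dsum (by decide) ih1.2 ih2.2⟩
  | ssum h1 h2 ih1 ih2 =>
      exact ⟨gen_ssum (by decide) ih1.1 ih2.1, gen_ssum (by decide) ih1.2 ih2.2⟩
end

section
/- A permutation avoiding both 2413 and 3142 of length at least 2 is decomposable as a direct sum or a skew sum of two nonempty permutations, and hence every {2413,3142}-avoiding permutation is separable. -/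
/-!
Induct on the length `m` of a prefix of `π`. If the first `m` entries split as a direct sum,
take the split point `k` as small as possible; then the first block has no direct-sum split, so
by induction it splits as a skew sum. The entry `π m` now either extends the direct-sum split, or
lies below all earlier entries (a skew split before it), or else a large entry of the upper-left
skew block, a small entry of the lower-right skew block, the entry at position `k` and `π m` form
a `3142`. Skew-sum splits are handled by the same argument after reversing the order of the
values, which exchanges `2413` and `3142`. Separability follows by induction on `n`, since both
blocks of a decomposition inherit the avoidance.
-/

open Function OrderDual

section Patterns

variable {α : Type*} [LinearOrder α] {n : ℕ}

def Has2413 (f : Fin n → α) : Prop :=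
  ∃ a b c d : Fin n, a < b ∧ b < c ∧ c < d ∧ f c < f a ∧ f a < f d ∧ f d < f b

def Has3142 (f : Fin n → α) : Prop :=
  ∃ a b c d : Fin n, a < b ∧ b < c ∧ c < d ∧ f b < f d ∧ f d < f a ∧ f a < f c

theorem has3142_toDual_comp_iff {f : Fin n → α} : Has3142 (toDual ∘ f) ↔ Has2413 f := by
  simp only [Has3142, Has2413, comp_apply, toDual_lt_toDual]
  exact exists₄_congr fun a b c d => by tauto

theorem Has2413.of_lt_iff_lt {β : Type*} [LinearOrder β] {m : ℕ} {f : Fin n → α}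
    {g : Fin m → β} {e : Fin m → Fin n} (he : StrictMono e)
    (hg : ∀ x y, g x < g y ↔ f (e x) < f (e y)) (h : Has2413 g) : Has2413 f := by
  obtain ⟨a, b, c, d, hab, hbc, hcd, h1, h2, h3⟩ := h
  exact ⟨e a, e b, e c, e d, he hab, he hbc, he hcd, (hg _ _).1 h1, (hg _ _).1 h2, (hg _ _).1 h3⟩

theorem Has3142.of_lt_iff_lt {β : Type*} [LinearOrder β] {m : ℕ} {f : Fin n → α}
    {g : Fin m → β} {e : Fin m → Fin n} (he : StrictMono e)
    (hg : ∀ x y, g x < g y ↔ f (e x) < f (e y)) (h : Has3142 g) : Has3142 f := by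
  obtain ⟨a, b, c, d, hab, hbc, hcd, h1, h2, h3⟩ := h
  exact ⟨e a, e b, e c, e d, he hab, he hbc, he hcd, (hg _ _).1 h1, (hg _ _).1 h2, (hg _ _).1 h3⟩

end Patterns

theorem Has2413.permContains {n : ℕ} {π : Fin n → Fin n} (h : Has2413 π) :
    PermContains π p2413 := by
  obtain ⟨a, b, c, d, hab, hbc, hcd, h1, h2, h3⟩ := h
  refine ⟨![a, b, c, d], Fin.strictMono_iff_lt_succ.2 fun i => ?_, fun x y => ?_⟩
  · fin_cases i <;> simpa
  · fin_cases x <;> fin_cases y <;> simp [p2413] <;> order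

theorem Has3142.permContains {n : ℕ} {π : Fin n → Fin n} (h : Has3142 π) :
    PermContains π p3142 := by
  obtain ⟨a, b, c, d, hab, hbc, hcd, h1, h2, h3⟩ := h
  refine ⟨![a, b, c, d], Fin.strictMono_iff_lt_succ.2 fun i => ?_, fun x y => ?_⟩
  · fin_cases i <;> simpa
  · fin_cases x <;> fin_cases y <;> simp [p3142] <;> order

section Splits

variable {α : Type*} [LinearOrder α] {n : ℕ}

/-- The entries of `f` at positions `< m` form a direct sum split after position `k`;
skew-sum splits of `f` are the splits of `toDual ∘ f`. -/
def SplitsAt (f : Fin n → α) (m k : ℕ) : Prop :=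
  ∀ i j : Fin n, (i : ℕ) < k → k ≤ (j : ℕ) → (j : ℕ) < m → f i < f j

def PrefixDecomposes (f : Fin n → α) (m : ℕ) : Prop :=
  ∃ k, 0 < k ∧ k < m ∧ (SplitsAt f m k ∨ SplitsAt (toDual ∘ f) m k)

theorem prefixDecomposes_toDual_comp_iff {f : Fin n → α} {m : ℕ} :
    PrefixDecomposes (toDual ∘ f) m ↔ PrefixDecomposes f m :=
  exists_congr fun _ => and_congr_right fun _ => and_congr_right fun _ => or_comm

theorem SplitsAt.trans {f : Fin n → α} {m k k' : ℕ} (h' : SplitsAt f k k') (h : SplitsAt f m k)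
    (hk' : k' ≤ k) : SplitsAt f m k' := by
  intro i j hi hj hjm
  by_cases hjk : (j : ℕ) < k
  · exact h' i j hi hj hjk
  · exact h i j (by omega) (by omega) hjm

theorem prefixDecomposes_two {f : Fin n → α} (hf : Injective f) (hn : 2 ≤ n) :
    PrefixDecomposes f 2 := by
  have hval : ∀ i j : Fin n, (i : ℕ) < 1 → 1 ≤ (j : ℕ) → (j : ℕ) < 2 →
      i = ⟨0, by omega⟩ ∧ j = ⟨1, hn⟩ := fun i j _ _ _ =>
    ⟨Fin.ext (by simp; omega), Fin.ext (by simp; omega)⟩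
  refine ⟨1, one_pos, one_lt_two, ?_⟩
  rcases lt_or_gt_of_ne (hf.ne (a₁ := ⟨0, by omega⟩) (a₂ := ⟨1, hn⟩) (by simp)) with h | h
  · exact .inl fun i j hi hj hj2 => by obtain ⟨rfl, rfl⟩ := hval i j hi hj hj2; exact h
  · exact .inr fun i j hi hj hj2 => by obtain ⟨rfl, rfl⟩ := hval i j hi hj hj2; exact h

theorem SplitsAt.has3142 {f : Fin n → α} {m k k' : ℕ} (hm : m < n) (hkm : k < m)
    (hk : SplitsAt f m k) (hk'0 : 0 < k') (hk'k : k' < k) (hskew : SplitsAt (toDual ∘ f) k k')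
    {g₀ d₀ : Fin n} (hg₀k : (g₀ : ℕ) < k) (hd₀k : (d₀ : ℕ) < k)
    (hg₀ : f ⟨m, hm⟩ < f g₀) (hd₀ : f d₀ < f ⟨m, hm⟩) : Has3142 f := by
  obtain ⟨g, hgk', hg⟩ : ∃ g : Fin n, (g : ℕ) < k' ∧ f ⟨m, hm⟩ < f g := by
    by_cases h : (g₀ : ℕ) < k'
    · exact ⟨g₀, h, hg₀⟩
    · exact ⟨⟨0, by omega⟩, hk'0,
        hg₀.trans (toDual_lt_toDual.1 (hskew ⟨0, by omega⟩ g₀ hk'0 (by omega) hg₀k))⟩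
  obtain ⟨d, hk'd, hdk, hd⟩ : ∃ d : Fin n, k' ≤ (d : ℕ) ∧ (d : ℕ) < k ∧ f d < f ⟨m, hm⟩ := by
    by_cases h : k' ≤ (d₀ : ℕ)
    · exact ⟨d₀, h, hd₀k, hd₀⟩
    · exact ⟨⟨k', by omega⟩, le_rfl, hk'k,
        (toDual_lt_toDual.1 (hskew d₀ ⟨k', by omega⟩ (by omega) le_rfl hk'k)).trans hd₀⟩
  exact ⟨g, d, ⟨k, by omega⟩, ⟨m, hm⟩, Fin.lt_def.2 (by omega), Fin.lt_def.2 hdk,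
    Fin.lt_def.2 hkm, hd, hg, hk g ⟨k, by omega⟩ (by omega) le_rfl hkm⟩

theorem SplitsAt.succ_or {f : Fin n → α} (hf : Injective f) (h3142 : ¬ Has3142 f) {m k : ℕ}
    (hm : m < n) (hk : SplitsAt f m k) (hkm : k < m)
    (hfirst : 2 ≤ k → ∃ k', 0 < k' ∧ k' < k ∧ SplitsAt (toDual ∘ f) k k') :
    SplitsAt f (m + 1) k ∨ SplitsAt (toDual ∘ f) (m + 1) m := by
  set z : Fin n := ⟨m, hm⟩
  have last : ∀ j : Fin n, m ≤ (j : ℕ) → (j : ℕ) < m + 1 → j = z := fun j _ _ =>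
    Fin.ext (by simp [z]; omega)
  by_cases hbelow : ∀ i : Fin n, (i : ℕ) < k → f i < f z
  · left
    intro i j hi hj hjm
    by_cases hj' : (j : ℕ) < m
    · exact hk i j hi hj hj'
    · rw [last j (by omega) hjm]; exact hbelow i hi
  by_cases habove : ∀ i : Fin n, (i : ℕ) < m → f z < f i
  · right
    intro i j hi hj hjm
    rw [last j hj hjm]; exact habove i hi
  exfalso
  push Not at hbelow habove
  obtain ⟨g₀, hg₀k, hg₀⟩ := hbelow
  obtain ⟨d₀, hd₀m, hd₀⟩ := habove
  replace hg₀ : f z < f g₀ := hg₀.lt_of_ne (hf.ne (Fin.ne_of_val_ne (by simp [z]; omega)))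
  replace hd₀ : f d₀ < f z := hd₀.lt_of_ne (hf.ne (Fin.ne_of_val_ne (by simp [z]; omega)))
  have hd₀k : (d₀ : ℕ) < k := by
    by_contra hcon
    exact (hk g₀ d₀ hg₀k (by omega) hd₀m).not_gt (hd₀.trans hg₀)
  have hg₀d₀ : g₀ ≠ d₀ := fun h => (hd₀.trans hg₀).ne (by rw [h])
  obtain ⟨k', hk'0, hk'k, hskew⟩ := hfirst (by have := Fin.val_ne_of_ne hg₀d₀; omega)
  exact h3142 (hk.has3142 hm hkm hk'0 hk'k hskew hg₀k hd₀k hg₀ hd₀)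

theorem prefixDecomposes_succ_of_splitsAt {f : Fin n → α} (hf : Injective f)
    (h3142 : ¬ Has3142 f) {m : ℕ} (hm : m < n)
    (ih : ∀ k, 2 ≤ k → k < m → PrefixDecomposes f k)
    (hsplit : ∃ k, 0 < k ∧ k < m ∧ SplitsAt f m k) : PrefixDecomposes f (m + 1) := by
  classical
  obtain ⟨hk0, hkm, hk⟩ := Nat.find_spec hsplit
  have hfirst : 2 ≤ Nat.find hsplit → ∃ k', 0 < k' ∧ k' < Nat.find hsplit ∧
      SplitsAt (toDual ∘ f) (Nat.find hsplit) k' := by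
    intro h2
    obtain ⟨k', hk'0, hk'k, hsum | hskew⟩ := ih _ h2 hkm
    · exact absurd ⟨hk'0, hk'k.trans hkm, hsum.trans hk hk'k.le⟩ (Nat.find_min hsplit hk'k)
    · exact ⟨k', hk'0, hk'k, hskew⟩
  rcases hk.succ_or hf h3142 hm hkm hfirst with h | h
  · exact ⟨_, hk0, by omega, .inl h⟩
  · exact ⟨m, by omega, by omega, .inr h⟩

theorem prefixDecomposes_of_avoids {f : Fin n → α} (hf : Injective f) (h2413 : ¬ Has2413 f)
    (h3142 : ¬ Has3142 f) {m : ℕ} (h2m : 2 ≤ m) (hmn : m ≤ n) : PrefixDecomposes f m := by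
  induction m using Nat.strong_induction_on with
  | _ m ih =>
  obtain rfl | h3m := h2m.eq_or_lt
  · exact prefixDecomposes_two hf hmn
  obtain ⟨m, rfl⟩ : ∃ m', m = m' + 1 := ⟨m - 1, by omega⟩
  have ih' : ∀ k, 2 ≤ k → k < m → PrefixDecomposes f k := fun k h2k hkm =>
    ih k (by omega) h2k (by omega)
  obtain ⟨k, hk0, hkm, hsum | hskew⟩ := ih m (by omega) (by omega) (by omega)
  · exact prefixDecomposes_succ_of_splitsAt hf h3142 (by omega) ih' ⟨k, hk0, hkm, hsum⟩
  · rw [← prefixDecomposes_toDual_comp_iff]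
    exact prefixDecomposes_succ_of_splitsAt (toDual.injective.comp hf)
      (has3142_toDual_comp_iff.not.2 h2413) (by omega)
      (fun k h2k hkm => prefixDecomposes_toDual_comp_iff.2 (ih' k h2k hkm)) ⟨k, hk0, hkm, hskew⟩

end Splits

section Blocks

open Finset

variable {n k : ℕ} {π : Fin n → Fin n}

theorem SplitsAt.val_lt (hπ : Injective π) (h : SplitsAt π n k) {i : Fin n} (hi : (i : ℕ) < k) :
    (π i : ℕ) < k := by
  rcases le_or_gt n k with hnk | hkn
  · exact (π i).isLt.trans_le hnk
  have hcard := card_le_card_of_injOn π (s := insert i (Ici ⟨k, hkn⟩)) (t := Ici (π i))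
    (fun j hj => by
      simp only [coe_insert, coe_Ici, Set.mem_insert_iff, Set.mem_Ici, Fin.le_def] at hj ⊢
      obtain rfl | hj := hj
      · exact le_rfl
      · exact (h i j hi hj j.isLt).le) hπ.injOn
  rw [card_insert_of_notMem (by simp [Fin.le_def]; omega), Fin.card_Ici, Fin.card_Ici,
    Fin.val_mk] at hcard
  omega

theorem SplitsAt.le_val (hπ : Injective π) (h : SplitsAt π n k) {j : Fin n} (hj : k ≤ (j : ℕ)) :
    k ≤ (π j : ℕ) := by
  have hcard := card_le_card_of_injOn π (s := Iio ⟨k, by omega⟩) (t := Iio (π j))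
    (fun i hi => by
      simp only [coe_Iio, Set.mem_Iio, Fin.lt_def] at hi ⊢
      exact h i j hi hj j.isLt) hπ.injOn
  simpa using hcard

theorem SplitsAt.rev_comp {m : ℕ} (h : SplitsAt (toDual ∘ π) m k) : SplitsAt (Fin.rev ∘ π) m k :=
  fun i j hi hj hjm => Fin.rev_lt_rev.2 (h i j hi hj hjm)

end Blocks

section Sums

variable {a b : ℕ} {π : Fin (a + b) → Fin (a + b)}

theorem SplitsAt.exists_eq_permDSum (hπ : Injective π) (h : SplitsAt π (a + b) a) :
    ∃ (σ : Fin a → Fin a) (τ : Fin b → Fin b), π = permDSum σ τ ∧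
      (∀ x y, σ x < σ y ↔ π (Fin.castAdd b x) < π (Fin.castAdd b y)) ∧
      (∀ x y, τ x < τ y ↔ π (Fin.natAdd a x) < π (Fin.natAdd a y)) := by
  have high : ∀ j : Fin (a + b), a ≤ (j : ℕ) → a ≤ (π j : ℕ) := fun j hj => h.le_val hπ hj
  refine ⟨fun x => ⟨π (Fin.castAdd b x), h.val_lt hπ (by simp)⟩,
    fun y => ⟨π (Fin.natAdd a y) - a, by
      have := (π (Fin.natAdd a y)).isLt
      have := high _ (by simp : a ≤ (Fin.natAdd a y : ℕ))
      omega⟩,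
    funext fun i => Fin.ext ?_, fun x y => Iff.rfl, fun x y => ?_⟩
  · by_cases hi : (i : ℕ) < a
    · simp [permDSum, hi]
    · have hi' : Fin.natAdd a ⟨(i : ℕ) - a, by omega⟩ = i := Fin.ext (by simp; omega)
      have := high i (by omega)
      simp [permDSum, hi, hi']
      omega
  · have := high (Fin.natAdd a x) (by simp); have := high (Fin.natAdd a y) (by simp)
    simp only [Fin.lt_def]; omega

theorem SplitsAt.exists_eq_permSSum (hπ : Injective π) (h : SplitsAt (toDual ∘ π) (a + b) a) :
    ∃ (σ : Fin a → Fin a) (τ : Fin b → Fin b), π = permSSum σ τ ∧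
      (∀ x y, σ x < σ y ↔ π (Fin.castAdd b x) < π (Fin.castAdd b y)) ∧
      (∀ x y, τ x < τ y ↔ π (Fin.natAdd a x) < π (Fin.natAdd a y)) := by
  have hrev := h.rev_comp
  have hrevπ : Injective (Fin.rev ∘ π) := Fin.rev_injective.comp hπ
  have high : ∀ i : Fin (a + b), (i : ℕ) < a → b ≤ (π i : ℕ) := fun i hi => by
    have := hrev.val_lt hrevπ hi
    simp only [comp_apply, Fin.val_rev] at this
    omega
  have low : ∀ j : Fin (a + b), a ≤ (j : ℕ) → (π j : ℕ) < b := fun j hj => by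
    have := hrev.le_val hrevπ hj
    simp only [comp_apply, Fin.val_rev] at this
    omega
  refine ⟨fun x => ⟨π (Fin.castAdd b x) - b, by
      have := (π (Fin.castAdd b x)).isLt
      have := high _ (by simp : (Fin.castAdd b x : ℕ) < a)
      omega⟩,
    fun y => ⟨π (Fin.natAdd a y), low _ (by simp)⟩,
    funext fun i => Fin.ext ?_, fun x y => ?_, fun x y => Iff.rfl⟩
  · by_cases hi : (i : ℕ) < a
    · have := high i hi
      simp [permSSum, hi]
      omega
    · have hi' : Fin.natAdd a ⟨(i : ℕ) - a, by omega⟩ = i := Fin.ext (by simp; omega)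
      simp [permSSum, hi, hi']
  · have := high (Fin.castAdd b x) (by simp); have := high (Fin.castAdd b y) (by simp)
    simp only [Fin.lt_def]; omega

end Sums

theorem injective_of_lt_iff_lt {ι κ α β : Type*} [Preorder β] [LinearOrder α] {g : ι → β}
    {f : κ → α} {e : ι → κ} (hfe : Injective (f ∘ e)) (hg : ∀ x y, g x < g y ↔ f (e x) < f (e y)) :
    Injective g := by
  intro x y hxy
  by_contra hne
  rcases lt_or_gt_of_ne (hfe.ne hne) with h | h
  · exact ((hg x y).2 h).ne hxy
  · exact ((hg y x).2 h).ne hxy.symm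

theorem separablePerm_of_avoids {n : ℕ} {π : Fin n → Fin n} (hπ : Injective π)
    (h2413 : ¬ Has2413 π) (h3142 : ¬ Has3142 π) (hn : 0 < n) : SeparablePerm n π := by
  induction n using Nat.strong_induction_on with
  | _ n ih =>
  obtain rfl | hn2 : n = 1 ∨ 2 ≤ n := by omega
  · rw [Subsingleton.elim π id]
    exact .single
  obtain ⟨a, ha, han, hsplit⟩ := prefixDecomposes_of_avoids hπ h2413 h3142 hn2 le_rfl
  obtain ⟨b, rfl⟩ : ∃ b, n = a + b := ⟨n - a, by omega⟩
  have block {m : ℕ} (σ : Fin m → Fin m) (e : Fin m → Fin (a + b)) (hm : 0 < m) (hmn : m < a + b)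
      (he : StrictMono e) (hσ : ∀ x y, σ x < σ y ↔ π (e x) < π (e y)) : SeparablePerm m σ :=
    ih m hmn (injective_of_lt_iff_lt (hπ.comp he.injective) hσ)
      (fun h => h2413 (h.of_lt_iff_lt he hσ)) (fun h => h3142 (h.of_lt_iff_lt he hσ)) hm
  rcases hsplit with hsum | hskew
  · obtain ⟨σ, τ, rfl, hσ, hτ⟩ := hsum.exists_eq_permDSum hπ
    exact .dsum (block σ _ ha (by omega) (Fin.strictMono_castAdd b) hσ)
      (block τ _ (by omega) (by omega) (Fin.strictMono_natAdd a) hτ)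
  · obtain ⟨σ, τ, rfl, hσ, hτ⟩ := hskew.exists_eq_permSSum hπ
    exact .ssum (block σ _ ha (by omega) (Fin.strictMono_castAdd b) hσ)
      (block τ _ (by omega) (by omega) (Fin.strictMono_natAdd a) hτ)

/-- A `{2413, 3142}`-avoiding permutation of length at least 2 decomposes as a direct
sum or a skew sum of two nonempty permutations; consequently it is separable. -/
theorem avoiding_decomposes_and_is_separable {n : ℕ} (π : Fin n → Fin n)
    (hπ : Function.Bijective π) (hn : 2 ≤ n)
    (h2413 : ¬ PermContains π p2413) (h3142 : ¬ PermContains π p3142) :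
    (∃ (a b : ℕ) (σ : Fin a → Fin a) (τ : Fin b → Fin b),
      0 < a ∧ 0 < b ∧ ∃ h : a + b = n,
        ((∀ i : Fin n, (π i : ℕ) = (permDSum σ τ ⟨(i : ℕ), by omega⟩ : Fin (a + b)).val) ∨
         (∀ i : Fin n, (π i : ℕ) = (permSSum σ τ ⟨(i : ℕ), by omega⟩ : Fin (a + b)).val))) ∧
    SeparablePerm n π := by
  have h2413' : ¬ Has2413 π := fun h => h2413 h.permContains
  have h3142' : ¬ Has3142 π := fun h => h3142 h.permContains
  refine ⟨?_, separablePerm_of_avoids hπ.1 h2413' h3142' (by omega)⟩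
  obtain ⟨a, ha, han, hsplit⟩ := prefixDecomposes_of_avoids hπ.1 h2413' h3142' hn le_rfl
  obtain ⟨b, rfl⟩ : ∃ b, n = a + b := ⟨n - a, by omega⟩
  rcases hsplit with hsum | hskew
  · obtain ⟨σ, τ, rfl, -⟩ := hsum.exists_eq_permDSum hπ.1
    exact ⟨a, b, σ, τ, ha, by omega, rfl, .inl fun i => rfl⟩
  · obtain ⟨σ, τ, rfl, -⟩ := hskew.exists_eq_permSSum hπ.1
    exact ⟨a, b, σ, τ, ha, by omega, rfl, .inr fun i => rfl⟩
end

section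
/- Let γ be a permutation containing an interval I such that the subpermutation induced by I avoids the pattern α, where α is a simple permutation of length at least 4. Let γ⁻ be the permutation obtained from γ by deflating I to a single element. Then γ contains α if and only if γ⁻ contains α. -/
/-- `I` is an interval (block) of `π`: consecutive positions with consecutive values. -/
def IsPermInterval {n : ℕ} (π : Fin n → Fin n) (I : Finset (Fin n)) : Prop :=
  (∀ ⦃a b c : Fin n⦄, a ∈ I → c ∈ I → a ≤ b → b ≤ c → b ∈ I) ∧
  (∀ ⦃a b c : Fin n⦄, a ∈ I → c ∈ I → π a ≤ π b → π b ≤ π c → b ∈ I)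

/-- A permutation is simple if its only intervals are of size at most one and the whole domain. -/
def IsSimplePerm {n : ℕ} (π : Fin n → Fin n) : Prop :=
  ∀ I : Finset (Fin n), IsPermInterval π I → I.card ≤ 1 ∨ I = Finset.univ

/-- Deflating an `α`-avoiding interval does not affect containment of a simple pattern `α`
of length at least 4.  Here the interval `I` of `γ` occupies the positions `[a, a + s)` and
the values `[v, v + s)`; the deflated permutation `δ` (of length `n - s + 1`) is obtained
by keeping position `a` as the representative of `I` (via the map `rep`) and compressing
the values as described by `hδ`. -/
theorem deflation_preserves_containment
    (n a s v m : ℕ) (hm : 4 ≤ m) (hs : 1 ≤ s) (han : a + s ≤ n) (hvn : v + s ≤ n)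
    (α : Fin m → Fin m) (hα : Function.Bijective α) (hαsimple : IsSimplePerm α)
    (γ : Fin n → Fin n) (hγ : Function.Bijective γ)
    -- the positions `[a, a+s)` form an interval of `γ` with values `[v, v+s)`:
    (hI : ∀ i : Fin n, (a ≤ (i : ℕ) ∧ (i : ℕ) < a + s) ↔ (v ≤ (γ i : ℕ) ∧ (γ i : ℕ) < v + s))
    -- the subpermutation induced by the interval avoids `α`:
    (hIav : ¬ ∃ f : Fin m → Fin n, StrictMono f ∧ (∀ j, a ≤ (f j : ℕ) ∧ (f j : ℕ) < a + s) ∧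
      (∀ x y : Fin m, α x < α y ↔ γ (f x) < γ (f y)))
    -- `rep` maps positions of the deflated permutation to representative positions of `γ`:
    (rep : Fin (n - s + 1) → Fin n)
    (hrep : ∀ i : Fin (n - s + 1), (rep i : ℕ) = if (i : ℕ) < a then (i : ℕ) else (i : ℕ) + s - 1)
    -- `δ` is the deflation of `γ` at the interval `I`:
    (δ : Fin (n - s + 1) → Fin (n - s + 1))
    (hδ : ∀ i : Fin (n - s + 1), (δ i : ℕ) =
      if (γ (rep i) : ℕ) < v then (γ (rep i) : ℕ)
      else if (γ (rep i) : ℕ) < v + s then v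
      else (γ (rep i) : ℕ) - s + 1) :
    PermContains γ α ↔ PermContains δ α := by
  classical
  -- value-interval membership characterization for `rep`
  have hrepIv : ∀ i : Fin (n - s + 1),
      (v ≤ (γ (rep i) : ℕ) ∧ (γ (rep i) : ℕ) < v + s) ↔ (i : ℕ) = a := by
    intro i
    rw [← hI (rep i)]
    have h2 := hrep i
    have h3 := i.isLt
    rcases lt_or_ge (i : ℕ) a with h | h
    · rw [if_pos h] at h2; omega
    · rw [if_neg (by omega)] at h2; omega
  have hrepMono : StrictMono rep := by
    intro i j hij
    have hij' : (i : ℕ) < j := hij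
    have h2 := hrep i
    have h3 := hrep j
    have : (rep i : ℕ) < rep j := by split_ifs at h2 h3 <;> omega
    exact this
  -- key comparison lemma for `δ`
  have hkey : ∀ i j : Fin (n - s + 1), i ≠ j →
      ((γ (rep i) : ℕ) < γ (rep j) ↔ (δ i : ℕ) < δ j) := by
    intro i j hne
    have hx := hδ i
    have hy := hδ j
    have hnb : ¬((v ≤ (γ (rep i) : ℕ) ∧ (γ (rep i) : ℕ) < v + s) ∧
        (v ≤ (γ (rep j) : ℕ) ∧ (γ (rep j) : ℕ) < v + s)) := by
      rintro ⟨h1, h2⟩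
      have e1 := (hrepIv i).1 h1
      have e2 := (hrepIv j).1 h2
      exact hne (Fin.ext (by omega))
    split_ifs at hx hy <;> omega
  constructor
  · -- forward direction: γ contains α → δ contains α
    rintro ⟨f, hf, hpat⟩
    set J : Finset (Fin m) :=
      Finset.univ.filter (fun j => a ≤ (f j : ℕ) ∧ (f j : ℕ) < a + s) with hJ
    have hJmem : ∀ j, j ∈ J ↔ (a ≤ (f j : ℕ) ∧ (f j : ℕ) < a + s) := by
      intro j; simp [hJ]
    have hJint : IsPermInterval α J := by
      constructor
      · intro x y z hx hz hxy hyz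
        have hx' := (hJmem x).1 hx
        have hz' := (hJmem z).1 hz
        have h1 : (f x : ℕ) ≤ f y := hf.monotone hxy
        have h2 : (f y : ℕ) ≤ f z := hf.monotone hyz
        rw [hJmem]; omega
      · intro x y z hx hz hxy hyz
        rcases eq_or_lt_of_le hxy with he | hlt
        · rw [← hα.injective he]; exact hx
        rcases eq_or_lt_of_le hyz with he' | hlt'
        · rw [hα.injective he']; exact hz
        have h1 : (γ (f x) : ℕ) < γ (f y) := (hpat x y).1 hlt
        have h2 : (γ (f y) : ℕ) < γ (f z) := (hpat y z).1 hlt'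
        have hvx := (hI (f x)).1 ((hJmem x).1 hx)
        have hvz := (hI (f z)).1 ((hJmem z).1 hz)
        rw [hJmem, hI (f y)]; omega
    rcases hαsimple J hJint with hcard | huniv
    · -- |J| ≤ 1 : deflate the embedding
      have huniq : ∀ x y : Fin m, (a ≤ (f x : ℕ) ∧ (f x : ℕ) < a + s) →
          (a ≤ (f y : ℕ) ∧ (f y : ℕ) < a + s) → x = y := by
        intro x y hx hy
        by_contra hne
        have : 1 < J.card :=
          Finset.one_lt_card.2 ⟨x, (hJmem x).2 hx, y, (hJmem y).2 hy, hne⟩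
        omega
      set gv : Fin m → ℕ := fun j =>
        if (f j : ℕ) < a then (f j : ℕ)
        else if (f j : ℕ) < a + s then a
        else (f j : ℕ) - s + 1 with hgv
      have hglt : ∀ j, gv j < n - s + 1 := by
        intro j
        have := (f j).isLt
        simp only [hgv]
        split_ifs <;> omega
      have hcomp : ∀ j, (δ ⟨gv j, hglt j⟩ : ℕ) =
          if (γ (f j) : ℕ) < v then (γ (f j) : ℕ)
          else if (γ (f j) : ℕ) < v + s then v
          else (γ (f j) : ℕ) - s + 1 := by
        intro j
        have hd := hδ ⟨gv j, hglt j⟩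
        have hr := hrep ⟨gv j, hglt j⟩
        simp only [Fin.val_mk] at hr
        by_cases h1 : (f j : ℕ) < a
        · have hg1 : gv j = (f j : ℕ) := by simp [hgv, h1]
          have hrepe : rep ⟨gv j, hglt j⟩ = f j := Fin.ext (by rw [hr, hg1, if_pos h1])
          rw [hrepe] at hd
          exact hd
        by_cases h2 : (f j : ℕ) < a + s
        · have hg1 : gv j = a := by simp [hgv, h1, h2]
          have hrv : (rep ⟨gv j, hglt j⟩ : ℕ) = a + s - 1 := by
            rw [hr, hg1, if_neg (lt_irrefl a)]
          have hiv := (hI (rep ⟨gv j, hglt j⟩)).1 (by omega)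
          have hfv := (hI (f j)).1 ⟨by omega, h2⟩
          rw [hd]
          split_ifs <;> omega
        · have hg1 : gv j = (f j : ℕ) - s + 1 := by simp [hgv, h1, h2]
          have hrepe : rep ⟨gv j, hglt j⟩ = f j :=
            Fin.ext (by rw [hr, hg1, if_neg (by omega)]; omega)
          rw [hrepe] at hd
          exact hd
      refine ⟨fun j => ⟨gv j, hglt j⟩, ?_, ?_⟩
      · intro x y hxy
        have hfxy : (f x : ℕ) < f y := hf hxy
        have hnb : ¬((a ≤ (f x : ℕ) ∧ (f x : ℕ) < a + s) ∧
            (a ≤ (f y : ℕ) ∧ (f y : ℕ) < a + s)) := by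
          rintro ⟨h1, h2⟩
          exact absurd (huniq x y h1 h2) (ne_of_lt hxy)
        show gv x < gv y
        simp only [hgv]
        split_ifs <;> omega
      · intro x y
        rcases eq_or_ne x y with rfl | hxy
        · simp
        · rw [hpat x y]
          show (γ (f x) < γ (f y)) ↔ δ ⟨gv x, hglt x⟩ < δ ⟨gv y, hglt y⟩
          have hdx := hcomp x
          have hdy := hcomp y
          have hnb : ¬((v ≤ (γ (f x) : ℕ) ∧ (γ (f x) : ℕ) < v + s) ∧
              (v ≤ (γ (f y) : ℕ) ∧ (γ (f y) : ℕ) < v + s)) := by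
            rintro ⟨h1, h2⟩
            exact hxy (huniq x y ((hI (f x)).2 h1) ((hI (f y)).2 h2))
          rw [Fin.lt_def, Fin.lt_def]
          split_ifs at hdx hdy <;> omega
    · -- J = univ : contradicts α-avoidance of the interval
      exfalso
      apply hIav
      refine ⟨f, hf, ?_, hpat⟩
      intro j
      have hj : j ∈ J := by rw [huniv]; exact Finset.mem_univ j
      exact (hJmem j).1 hj
  · -- backward direction: δ contains α → γ contains α
    rintro ⟨g, hg, hpat⟩
    refine ⟨rep ∘ g, hrepMono.comp hg, ?_⟩
    intro x y
    rcases eq_or_ne x y with rfl | hxy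
    · simp
    · have hgne : g x ≠ g y := fun h => hxy (hg.injective h)
      rw [hpat x y]
      have := hkey (g x) (g y) hgne
      simp only [Function.comp_apply, Fin.lt_def]
      omega
end

section
/- The class Av(α) of α-avoiding permutations is closed under inflations: if τ ∈ Av(α) has length k and σ₁,...,σ_k ∈ Av(α), then the inflation τ[σ₁,...,σ_k] also avoids α, provided α is simple of length at least 4. -/
open Finset in
lemma W_insert {k : ℕ} (len : Fin k → ℕ) (ρ : Fin k → Fin k) (hρ : Function.Injective ρ)
    (i : Fin k) :
    (∑ j ∈ univ.filter (fun j => ρ j < ρ i), len j) + len i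
      = ∑ j ∈ univ.filter (fun j => ρ j ≤ ρ i), len j := by
  have h : univ.filter (fun j => ρ j ≤ ρ i) = insert i (univ.filter (fun j => ρ j < ρ i)) := by
    ext j
    simp only [mem_filter, mem_univ, true_and, mem_insert]
    constructor
    · intro hj
      rcases lt_or_eq_of_le hj with h' | h'
      · exact Or.inr h'
      · exact Or.inl (hρ h')
    · rintro (rfl | h')
      · exact le_rfl
      · exact le_of_lt h'
  rw [h, Finset.sum_insert (by simp)]
  omega

open Finset in
lemma W_lt {k : ℕ} (len : Fin k → ℕ) (ρ : Fin k → Fin k) (hρ : Function.Injective ρ)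
    {i i' : Fin k} {l l' : ℕ} (hii : ρ i' < ρ i) (hl' : l' < len i') :
    (∑ j ∈ univ.filter (fun j => ρ j < ρ i'), len j) + l'
      < (∑ j ∈ univ.filter (fun j => ρ j < ρ i), len j) + l := by
  have h1 : (∑ j ∈ univ.filter (fun j => ρ j < ρ i'), len j) + len i'
      ≤ ∑ j ∈ univ.filter (fun j => ρ j < ρ i), len j := by
    rw [W_insert len ρ hρ i']
    apply Finset.sum_le_sum_of_subset
    intro j hj
    simp only [mem_filter, mem_univ, true_and] at hj ⊢
    exact lt_of_le_of_lt hj hii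
  omega

open Finset in
lemma W_le {k : ℕ} (len : Fin k → ℕ) (ρ : Fin k → Fin k) (hρ : Function.Injective ρ)
    {i i' : Fin k} {l l' : ℕ} (hl : l < len i)
    (h : (∑ j ∈ univ.filter (fun j => ρ j < ρ i'), len j) + l'
      ≤ (∑ j ∈ univ.filter (fun j => ρ j < ρ i), len j) + l) : ρ i' ≤ ρ i := by
  by_contra hc
  exact absurd h (not_le.mpr (W_lt len ρ hρ (not_le.mp hc) hl))

open Finset in
lemma W_lt_iff {k : ℕ} (len : Fin k → ℕ) (ρ : Fin k → Fin k) (hρ : Function.Injective ρ)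
    {i i' : Fin k} {l l' : ℕ} (hii : i ≠ i') (hl : l < len i) (hl' : l' < len i') :
    ((∑ j ∈ univ.filter (fun j => ρ j < ρ i), len j) + l
      < (∑ j ∈ univ.filter (fun j => ρ j < ρ i'), len j) + l') ↔ ρ i < ρ i' := by
  constructor
  · intro h
    rcases lt_trichotomy (ρ i) (ρ i') with h' | h' | h'
    · exact h'
    · exact absurd (hρ h') hii
    · exact absurd h (not_lt.mpr (le_of_lt (W_lt len ρ hρ h' hl')))
  · intro h'
    exact W_lt len ρ hρ h' hl

open Finset in
lemma exists_block {k : ℕ} (len : Fin k → ℕ) (n : ℕ) (hn : n < ∑ i, len i) :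
    ∃ i : Fin k, ∃ l : ℕ, l < len i ∧
      n = (∑ j ∈ univ.filter (fun j => j < i), len j) + l := by
  classical
  have hk : 0 < k := by
    rcases Nat.eq_zero_or_pos k with rfl | h
    · simp at hn
    · exact h
  have idinj : Function.Injective (fun j : Fin k => j) := fun _ _ h => h
  set S : Finset (Fin k) :=
    univ.filter (fun i => (∑ j ∈ univ.filter (fun j => j < i), len j) ≤ n) with hSdef
  have hS : S.Nonempty := by
    refine ⟨⟨0, hk⟩, ?_⟩
    simp only [hSdef, mem_filter, mem_univ, true_and]
    have h0 : univ.filter (fun j : Fin k => j < (⟨0, hk⟩ : Fin k)) = ∅ := by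
      ext j; simp [Fin.lt_def]
    rw [h0]
    simp
  set i := S.max' hS with hidef
  have hPi : (∑ j ∈ univ.filter (fun j => j < i), len j) ≤ n := by
    have := S.max'_mem hS
    simp only [hSdef, mem_filter, mem_univ, true_and] at this
    exact this
  refine ⟨i, n - (∑ j ∈ univ.filter (fun j => j < i), len j), ?_, by omega⟩
  by_contra hc
  have hge : (∑ j ∈ univ.filter (fun j => j < i), len j) + len i ≤ n := by omega
  have hins : (∑ j ∈ univ.filter (fun j => j < i), len j) + len i
      = ∑ j ∈ univ.filter (fun j => j ≤ i), len j :=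
    W_insert len (fun j => j) idinj i
  by_cases htop : (i : ℕ) + 1 < k
  · set i' : Fin k := ⟨(i : ℕ) + 1, htop⟩ with hi'def
    have hfe : univ.filter (fun j : Fin k => j < i') = univ.filter (fun j => j ≤ i) := by
      ext j
      simp only [mem_filter, mem_univ, true_and, Fin.lt_def, Fin.le_def, hi'def]
      omega
    have hmem : i' ∈ S := by
      simp only [hSdef, mem_filter, mem_univ, true_and]
      rw [hfe, ← hins]
      exact hge
    have hle := S.le_max' i' hmem
    rw [← hidef] at hle
    have : (i' : ℕ) ≤ (i : ℕ) := hle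
    simp only [hi'def] at this
    omega
  · have hfu : univ.filter (fun j : Fin k => j ≤ i) = univ := by
      ext j
      simp only [mem_filter, mem_univ, true_and, Fin.le_def, iff_true]
      have := j.isLt
      omega
    rw [hfu] at hins
    have hnn : n < ∑ j ∈ univ, len j := hn
    omega

lemma sigma_cast {k : ℕ} {len : Fin k → ℕ} (σ : ∀ i : Fin k, Fin (len i) → Fin (len i))
    {i j : Fin k} (h : i = j) (l : ℕ) (hl : l < len i) (hl' : l < len j) :
    (σ i ⟨l, hl⟩ : ℕ) = (σ j ⟨l, hl'⟩ : ℕ) := by subst h; rfl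

/-- For a simple pattern `α` of length at least 4, the class `Av(α)` is closed under
inflations: if `τ` avoids `α` and each `σ i` avoids `α`, then the inflation
`π = τ[σ 1, …, σ k]` avoids `α`.  The inflation is described by `hinf`: the point at
global position `P i + l` (where `P i` is the sum of the block lengths of the blocks
to the left of block `i`) has value `V i + σ i l` (where `V i` is the sum of the block
lengths of the blocks whose `τ`-value is below that of block `i`). -/
theorem avoidance_closed_under_inflation
    (k m N : ℕ) (hm : 4 ≤ m)
    (α : Fin m → Fin m) (hα : Function.Bijective α) (hαsimple : IsSimplePerm α)
    (τ : Fin k → Fin k) (hτ : Function.Bijective τ) (hτav : ¬ PermContains τ α)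
    (len : Fin k → ℕ) (hlen : ∀ i, 1 ≤ len i)
    (σ : ∀ i : Fin k, Fin (len i) → Fin (len i))
    (hσ : ∀ i, Function.Bijective (σ i)) (hσav : ∀ i, ¬ PermContains (σ i) α)
    (hN : N = ∑ i, len i)
    (π : Fin N → Fin N) (hπ : Function.Bijective π)
    (hinf : ∀ (i : Fin k) (l : Fin (len i)) (x : Fin N),
      (x : ℕ) = (∑ j ∈ Finset.univ.filter (fun j => j < i), len j) + (l : ℕ) →
      (π x : ℕ) = (∑ j ∈ Finset.univ.filter (fun j => τ j < τ i), len j) + (σ i l : ℕ)) :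
    ¬ PermContains π α := by
  classical
  rintro ⟨f, hfmono, hf⟩
  have idinj : Function.Injective (fun j : Fin k => j) := fun _ _ h => h
  have τinj : Function.Injective τ := hτ.injective
  -- decompose every position into block index and offset
  have hdec : ∀ x : Fin N, ∃ i : Fin k, ∃ l : ℕ, l < len i ∧
      (x : ℕ) = (∑ j ∈ Finset.univ.filter (fun j => j < i), len j) + l := by
    intro x
    exact exists_block len x (by rw [← hN]; exact x.isLt)
  choose b off hofflt hxb using hdec
  have hπval : ∀ x : Fin N, (π x : ℕ)
      = (∑ j ∈ Finset.univ.filter (fun j => τ j < τ (b x)), len j)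
        + (σ (b x) ⟨off x, hofflt x⟩ : ℕ) :=
    fun x => hinf (b x) ⟨off x, hofflt x⟩ x (hxb x)
  -- position order gives block order
  have hble : ∀ x y : Fin N, x ≤ y → b x ≤ b y := by
    intro x y hxy
    have h : (∑ j ∈ Finset.univ.filter (fun j => j < b x), len j) + off x
        ≤ (∑ j ∈ Finset.univ.filter (fun j => j < b y), len j) + off y := by
      rw [← hxb x, ← hxb y]; exact hxy
    exact W_le len (fun j => j) idinj (hofflt y) h
  -- value order gives τ-order of blocks
  have hτle : ∀ x y : Fin N, π x ≤ π y → τ (b x) ≤ τ (b y) := by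
    intro x y hxy
    have h : (∑ j ∈ Finset.univ.filter (fun j => τ j < τ (b x)), len j)
          + (σ (b x) ⟨off x, hofflt x⟩ : ℕ)
        ≤ (∑ j ∈ Finset.univ.filter (fun j => τ j < τ (b y)), len j)
          + (σ (b y) ⟨off y, hofflt y⟩ : ℕ) := by
      rw [← hπval x, ← hπval y]; exact hxy
    exact W_le len τ τinj (Fin.is_lt _) h
  have hvallt : ∀ x y : Fin N, b x ≠ b y → (π x < π y ↔ τ (b x) < τ (b y)) := by
    intro x y hxy
    rw [Fin.lt_def, hπval x, hπval y]
    exact W_lt_iff len τ τinj hxy (Fin.is_lt _) (Fin.is_lt _)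
  have hfle : ∀ a c : Fin m, α a ≤ α c ↔ π (f a) ≤ π (f c) := by
    intro a c
    rw [← not_lt, ← not_lt]
    exact not_congr (hf c a)
  -- the preimage of each block is an interval of α
  have hint : ∀ i : Fin k,
      IsPermInterval α (Finset.univ.filter (fun a => b (f a) = i)) := by
    intro i
    constructor
    · intro a c' c ha hc h1 h2
      simp only [Finset.mem_filter, Finset.mem_univ, true_and] at ha hc ⊢
      have l1 : b (f a) ≤ b (f c') := hble _ _ (hfmono.monotone h1)
      have l2 : b (f c') ≤ b (f c) := hble _ _ (hfmono.monotone h2)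
      rw [ha] at l1
      rw [hc] at l2
      exact le_antisymm l2 l1
    · intro a c' c ha hc h1 h2
      simp only [Finset.mem_filter, Finset.mem_univ, true_and] at ha hc ⊢
      have l1 : τ (b (f a)) ≤ τ (b (f c')) := hτle _ _ ((hfle a c').mp h1)
      have l2 : τ (b (f c')) ≤ τ (b (f c)) := hτle _ _ ((hfle c' c).mp h2)
      rw [ha] at l1
      rw [hc] at l2
      exact τinj (le_antisymm l2 l1)
  by_cases hA : ∃ i : Fin k, (Finset.univ.filter (fun a => b (f a) = i)) = Finset.univ
  · -- all points in one block: σ i contains α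
    obtain ⟨i, hiu⟩ := hA
    have hall : ∀ a : Fin m, b (f a) = i := by
      intro a
      have : a ∈ Finset.univ.filter (fun a => b (f a) = i) := by
        rw [hiu]; exact Finset.mem_univ a
      exact (Finset.mem_filter.mp this).2
    apply hσav i
    refine ⟨fun a => ⟨off (f a), hall a ▸ hofflt (f a)⟩, ?_, ?_⟩
    · intro a c hac
      have hfc : (f a : ℕ) < (f c : ℕ) := hfmono hac
      rw [hxb (f a), hxb (f c), hall a, hall c] at hfc
      exact Fin.mk_lt_mk.mpr (by omega)
    · intro a c
      have hπ' : ∀ a : Fin m, (π (f a) : ℕ)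
          = (∑ j ∈ Finset.univ.filter (fun j => τ j < τ i), len j)
            + ((σ i ⟨off (f a), hall a ▸ hofflt (f a)⟩ : Fin (len i)) : ℕ) := by
        intro a
        rw [hπval (f a), sigma_cast σ (hall a) (off (f a)) (hofflt (f a)) (hall a ▸ hofflt (f a)),
          show τ (b (f a)) = τ i from congrArg τ (hall a)]
      rw [hf a c]
      simp only [Fin.lt_def, hπ' a, hπ' c]
      omega
  · -- each block contains at most one point: τ contains α
    have hcard : ∀ i : Fin k, (Finset.univ.filter (fun a => b (f a) = i)).card ≤ 1 := by
      intro i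
      rcases hαsimple _ (hint i) with h | h
      · exact h
      · exact absurd ⟨i, h⟩ hA
    have hbinj : Function.Injective (fun a => b (f a)) := by
      intro a c h
      refine Finset.card_le_one.mp (hcard (b (f a))) a ?_ c ?_
      · simp
      · simp only [Finset.mem_filter, Finset.mem_univ, true_and]
        exact h.symm
    have hbmono : Monotone (fun a => b (f a)) := fun a c h => hble _ _ (hfmono.monotone h)
    have hbs : StrictMono (fun a => b (f a)) := hbmono.strictMono_of_injective hbinj
    apply hτav
    refine ⟨fun a => b (f a), hbs, ?_⟩
    intro a c
    by_cases hac : a = c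
    · subst hac; simp
    · rw [hf a c]
      exact hvallt _ _ (fun h => hac (hbinj h))
end

section
/- The major index of a permutation π equals occ(1-32, π) + occ(2-31, π) + occ(3-21, π) + occ(-21, π), where the vincular pattern occurrences require the last two pattern elements to occupy consecutive positions in π. -/
open scoped Classical

/-- The major index of a permutation: the sum of the (1-indexed) positions `i` with
`π(i) > π(i+1)`.  Positions here are 0-indexed, so a descent at `i : Fin n` (i.e.
`π(i) > π(j)` for the successive position `j`) contributes `i + 1`. -/
noncomputable def majIdx (n : ℕ) (π : Fin n → Fin n) : ℕ :=
  ∑ i : Fin n, if ∃ j : Fin n, (i : ℕ) + 1 = (j : ℕ) ∧ π j < π i then (i : ℕ) + 1 else 0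

/-- The number of occurrences of the vincular pattern `1-32` in `π`. -/
noncomputable def occ132 (n : ℕ) (π : Fin n → Fin n) : ℕ :=
  {t : Fin n × Fin n × Fin n | t.1 < t.2.1 ∧ (t.2.1 : ℕ) + 1 = (t.2.2 : ℕ) ∧
    π t.1 < π t.2.2 ∧ π t.2.2 < π t.2.1}.ncard

/-- The number of occurrences of the vincular pattern `2-31` in `π`. -/
noncomputable def occ231 (n : ℕ) (π : Fin n → Fin n) : ℕ :=
  {t : Fin n × Fin n × Fin n | t.1 < t.2.1 ∧ (t.2.1 : ℕ) + 1 = (t.2.2 : ℕ) ∧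
    π t.2.2 < π t.1 ∧ π t.1 < π t.2.1}.ncard

/-- The number of occurrences of the vincular pattern `3-21` in `π`. -/
noncomputable def occ321 (n : ℕ) (π : Fin n → Fin n) : ℕ :=
  {t : Fin n × Fin n × Fin n | t.1 < t.2.1 ∧ (t.2.1 : ℕ) + 1 = (t.2.2 : ℕ) ∧
    π t.2.1 < π t.1 ∧ π t.2.2 < π t.2.1}.ncard

/-- The number of occurrences of the vincular pattern `-21` (descents) in `π`. -/
noncomputable def occ21 (n : ℕ) (π : Fin n → Fin n) : ℕ :=
  {p : Fin n × Fin n | (p.1 : ℕ) + 1 = (p.2 : ℕ) ∧ π p.2 < π p.1}.ncard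

lemma ncard_setOf {α : Type*} [Fintype α] (p : α → Prop) :
    {x | p x}.ncard = ∑ x, if p x then 1 else 0 := by
  rw [Set.ncard_eq_toFinset_card', Set.toFinset_setOf, Finset.card_filter]

lemma card_lt (n : ℕ) (b : Fin n) : (∑ a : Fin n, if a < b then 1 else 0) = (b : ℕ) := by
  rw [← Finset.card_filter]
  have : Finset.univ.filter (· < b) = Finset.Iio b := by
    ext a; simp [Finset.mem_Iio]
  rw [this, Fin.card_Iio]

lemma key (n : ℕ) (π : Fin n → Fin n) (hinj : Function.Injective π) (b : Fin n) :
    (if ∃ j : Fin n, (b : ℕ) + 1 = (j : ℕ) ∧ π j < π b then (b : ℕ) + 1 else 0) =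
    ∑ j : Fin n,
      ((∑ a : Fin n,
        ((if a < b ∧ (b : ℕ) + 1 = (j : ℕ) ∧ π a < π j ∧ π j < π b then 1 else 0) +
         (if a < b ∧ (b : ℕ) + 1 = (j : ℕ) ∧ π j < π a ∧ π a < π b then 1 else 0) +
         (if a < b ∧ (b : ℕ) + 1 = (j : ℕ) ∧ π b < π a ∧ π j < π b then 1 else 0))) +
       (if (b : ℕ) + 1 = (j : ℕ) ∧ π j < π b then 1 else 0)) := by
  by_cases h : ∃ j : Fin n, (b : ℕ) + 1 = (j : ℕ) ∧ π j < π b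
  · obtain ⟨j0, hj0, hd⟩ := h
    rw [if_pos ⟨j0, hj0, hd⟩, Finset.sum_eq_single j0]
    · have hsum : (∑ a : Fin n,
          ((if a < b ∧ (b : ℕ) + 1 = (j0 : ℕ) ∧ π a < π j0 ∧ π j0 < π b then 1 else 0) +
           (if a < b ∧ (b : ℕ) + 1 = (j0 : ℕ) ∧ π j0 < π a ∧ π a < π b then 1 else 0) +
           (if a < b ∧ (b : ℕ) + 1 = (j0 : ℕ) ∧ π b < π a ∧ π j0 < π b then 1 else 0))) = (b : ℕ) := by
        have hc : (∑ a : Fin n,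
            ((if a < b ∧ (b : ℕ) + 1 = (j0 : ℕ) ∧ π a < π j0 ∧ π j0 < π b then 1 else 0) +
             (if a < b ∧ (b : ℕ) + 1 = (j0 : ℕ) ∧ π j0 < π a ∧ π a < π b then 1 else 0) +
             (if a < b ∧ (b : ℕ) + 1 = (j0 : ℕ) ∧ π b < π a ∧ π j0 < π b then 1 else 0))) =
            ∑ a : Fin n, if a < b then 1 else 0 := by
          apply Finset.sum_congr rfl
          intro a _
          by_cases ha : a < b
          · have haj : a ≠ j0 := by
              intro he
              have h1 : (a : ℕ) < (b : ℕ) := ha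
              have h2 : (a : ℕ) = (j0 : ℕ) := by rw [he]
              omega
            have hab : a ≠ b := ne_of_lt ha
            rw [if_pos ha]
            rcases lt_trichotomy (π a) (π j0) with h1 | h1 | h1
            · rw [if_pos ⟨ha, hj0, h1, hd⟩,
                  if_neg (fun hc => lt_asymm h1 hc.2.2.1),
                  if_neg (fun hc => lt_asymm (h1.trans hd) hc.2.2.1)]
            · exact absurd (hinj h1) haj
            · rcases lt_trichotomy (π a) (π b) with h2 | h2 | h2
              · rw [if_neg (fun hc => lt_asymm h1 hc.2.2.1),
                    if_pos ⟨ha, hj0, h1, h2⟩,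
                    if_neg (fun hc => lt_asymm h2 hc.2.2.1)]
              · exact absurd (hinj h2) hab
              · rw [if_neg (fun hc => lt_asymm h1 hc.2.2.1),
                    if_neg (fun hc => lt_asymm h2 hc.2.2.2),
                    if_pos ⟨ha, hj0, h2, hd⟩]
          · rw [if_neg (fun hc => ha hc.1), if_neg (fun hc => ha hc.1),
                if_neg (fun hc => ha hc.1), if_neg ha]
        rw [hc, card_lt]
      rw [hsum, if_pos ⟨hj0, hd⟩]
    · intro j _ hj
      have hne : (b : ℕ) + 1 ≠ (j : ℕ) := by
        intro he
        exact hj (Fin.ext (by omega))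
      rw [if_neg (fun hc => hne hc.1), add_zero]
      apply Finset.sum_eq_zero
      intro a _
      rw [if_neg (fun hc => hne hc.2.1), if_neg (fun hc => hne hc.2.1),
          if_neg (fun hc => hne hc.2.1), add_zero, add_zero]
    · intro hj0'; exact absurd (Finset.mem_univ j0) hj0'
  · rw [if_neg h]
    symm
    apply Finset.sum_eq_zero
    intro j _
    rw [if_neg (fun hc : _ ∧ _ => h ⟨j, hc⟩), add_zero]
    apply Finset.sum_eq_zero
    intro a _
    rw [if_neg (fun hc => h ⟨j, hc.2.1, hc.2.2.2⟩),
        if_neg (fun hc => h ⟨j, hc.2.1, hc.2.2.1.trans hc.2.2.2⟩),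
        if_neg (fun hc => h ⟨j, hc.2.1, hc.2.2.2⟩), add_zero, add_zero]

theorem maj_aux (n : ℕ) (π : Fin n → Fin n)
    (hπ : Function.Bijective π) :
    (∑ i : Fin n, if ∃ j : Fin n, (i : ℕ) + 1 = (j : ℕ) ∧ π j < π i then (i : ℕ) + 1 else 0) =
      ({t : Fin n × Fin n × Fin n | t.1 < t.2.1 ∧ (t.2.1 : ℕ) + 1 = (t.2.2 : ℕ) ∧
        π t.1 < π t.2.2 ∧ π t.2.2 < π t.2.1}.ncard) +
      ({t : Fin n × Fin n × Fin n | t.1 < t.2.1 ∧ (t.2.1 : ℕ) + 1 = (t.2.2 : ℕ) ∧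
        π t.2.2 < π t.1 ∧ π t.1 < π t.2.1}.ncard) +
      ({t : Fin n × Fin n × Fin n | t.1 < t.2.1 ∧ (t.2.1 : ℕ) + 1 = (t.2.2 : ℕ) ∧
        π t.2.1 < π t.1 ∧ π t.2.2 < π t.2.1}.ncard) +
      ({p : Fin n × Fin n | (p.1 : ℕ) + 1 = (p.2 : ℕ) ∧ π p.2 < π p.1}.ncard) := by
  have hinj := hπ.injective
  have h1 : {t : Fin n × Fin n × Fin n | t.1 < t.2.1 ∧ (t.2.1 : ℕ) + 1 = (t.2.2 : ℕ) ∧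
        π t.1 < π t.2.2 ∧ π t.2.2 < π t.2.1}.ncard =
      ∑ b : Fin n, ∑ j : Fin n, ∑ a : Fin n,
        if a < b ∧ (b : ℕ) + 1 = (j : ℕ) ∧ π a < π j ∧ π j < π b then 1 else 0 := by
    rw [ncard_setOf, Fintype.sum_prod_type, Finset.sum_comm, Fintype.sum_prod_type]; congr!
  have h2 : {t : Fin n × Fin n × Fin n | t.1 < t.2.1 ∧ (t.2.1 : ℕ) + 1 = (t.2.2 : ℕ) ∧
        π t.2.2 < π t.1 ∧ π t.1 < π t.2.1}.ncard =
      ∑ b : Fin n, ∑ j : Fin n, ∑ a : Fin n,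
        if a < b ∧ (b : ℕ) + 1 = (j : ℕ) ∧ π j < π a ∧ π a < π b then 1 else 0 := by
    rw [ncard_setOf, Fintype.sum_prod_type, Finset.sum_comm, Fintype.sum_prod_type]; congr!
  have h3 : {t : Fin n × Fin n × Fin n | t.1 < t.2.1 ∧ (t.2.1 : ℕ) + 1 = (t.2.2 : ℕ) ∧
        π t.2.1 < π t.1 ∧ π t.2.2 < π t.2.1}.ncard =
      ∑ b : Fin n, ∑ j : Fin n, ∑ a : Fin n,
        if a < b ∧ (b : ℕ) + 1 = (j : ℕ) ∧ π b < π a ∧ π j < π b then 1 else 0 := by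
    rw [ncard_setOf, Fintype.sum_prod_type, Finset.sum_comm, Fintype.sum_prod_type]; congr!
  have h4 : {p : Fin n × Fin n | (p.1 : ℕ) + 1 = (p.2 : ℕ) ∧ π p.2 < π p.1}.ncard =
      ∑ b : Fin n, ∑ j : Fin n, if (b : ℕ) + 1 = (j : ℕ) ∧ π j < π b then 1 else 0 := by
    rw [ncard_setOf, Fintype.sum_prod_type]; congr!
  rw [h1, h2, h3, h4, Finset.sum_congr rfl (fun b _ => key n π hinj b)]
  simp only [Finset.sum_add_distrib]

/-- Babson–Steingrímsson: `maj(π) = occ(1-32, π) + occ(2-31, π) + occ(3-21, π) + occ(-21, π)`. -/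
theorem maj_eq_sum_of_vincular_occurrences (n : ℕ) (π : Fin n → Fin n)
    (hπ : Function.Bijective π) :
    majIdx n π = occ132 n π + occ231 n π + occ321 n π + occ21 n π := by
  simp only [majIdx, occ132, occ231, occ321, occ21]
  exact maj_aux n π hπ
end
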